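/- arXiv:1606.02110 — 4 statements merged into one kernel-verified Lean document; each statement's English description precedes it below -/
import Mathlib

section
/- Let $y_0 \geq 4$ and define recursively $y_{j+1} = y_j(1 + 1/\log y_j)$. Then there exists an absolute constant $C > 0$ (independent of $y_0$) such that $\sum_{j=0}^{\infty} \frac{\log y_j}{y_j} \leq C \frac{(\log y_0)^2}{y_0}$. -/
/-- Lemma "basic": for `y₀ ≥ 4` and `y_{j+1} = y_j (1 + 1/log y_j)`, the sum
`∑ log y_j / y_j` is bounded by an absolute constant times `(log y₀)² / y₀`. -/
theorem stmt1 : ∃ C > (0:ℝ), ∀ (y : ℕ → ℝ), 4 ≤ y 0 →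
    (∀ j, y (j + 1) = y j * (1 + 1 / Real.log (y j))) →
    ∑' j : ℕ, Real.log (y j) / y j ≤ C * (Real.log (y 0)) ^ 2 / y 0 := by
  refine ⟨8 * 5 ^ 14, by norm_num, ?_⟩
  intro y h0 hrec
  set L : ℕ → ℝ := fun j => Real.log (y j) with hLdef
  have hlog4 : (1.38:ℝ) < Real.log 4 := by
    have h2 := Real.log_two_gt_d9
    have h4 : Real.log 4 = Real.log 2 + Real.log 2 := by
      rw [show (4:ℝ) = 2 * 2 by norm_num, Real.log_mul] <;> norm_num
    linarith
  have hy : ∀ j, 4 ≤ y j := by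
    intro j
    induction j with
    | zero => exact h0
    | succ n ih =>
      have hyn : (0:ℝ) < y n := by linarith
      have hLn : (1.38:ℝ) ≤ L n := le_of_lt (lt_of_lt_of_le hlog4 (Real.log_le_log (by norm_num) ih))
      have hLnpos : (0:ℝ) < L n := by linarith
      have h1 : (0:ℝ) < 1 / L n := one_div_pos.mpr hLnpos
      calc (4:ℝ) ≤ y n := ih
        _ = y n * 1 := by ring
        _ ≤ y n * (1 + 1 / L n) := by nlinarith
        _ = y (n+1) := (hrec n).symm
  have hypos : ∀ j, (0:ℝ) < y j := fun j => lt_of_lt_of_le (by norm_num) (hy j)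
  have hL : ∀ j, (1.38:ℝ) ≤ L j := fun j =>
    le_of_lt (lt_of_lt_of_le hlog4 (Real.log_le_log (by norm_num) (hy j)))
  have hLpos : ∀ j, (0:ℝ) < L j := fun j => lt_of_lt_of_le (by norm_num) (hL j)
  have hfacpos : ∀ j, (0:ℝ) < 1 + 1 / L j := by
    intro j
    have : (0:ℝ) < 1 / L j := one_div_pos.mpr (hLpos j)
    linarith
  have hymono : ∀ j, y j ≤ y (j+1) := by
    intro j
    have hyj := hypos j
    have h1 : (0:ℝ) < 1 / L j := one_div_pos.mpr (hLpos j)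
    calc y j = y j * 1 := by ring
      _ ≤ y j * (1 + 1 / L j) := by nlinarith
      _ = y (j+1) := (hrec j).symm
  have hLrec : ∀ j, L (j+1) = L j + Real.log (1 + 1 / L j) := by
    intro j
    show Real.log (y (j+1)) = _
    rw [hrec j, Real.log_mul (ne_of_gt (hypos j)) (ne_of_gt (hfacpos j))]
  have hLup : ∀ j, L (j+1) ≤ L j + 1 / L j := by
    intro j
    have h := Real.log_le_sub_one_of_pos (hfacpos j)
    rw [hLrec j]; linarith
  have hLmono : ∀ j, L j ≤ L (j+1) := by
    intro j
    have h1 : (0:ℝ) < 1 / L j := one_div_pos.mpr (hLpos j)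
    have h : 0 ≤ Real.log (1 + 1 / L j) := Real.log_nonneg (by linarith)
    rw [hLrec j]; linarith
  have hLlow : ∀ j, L j ≤ 4 → L j + 1/5 ≤ L (j+1) := by
    intro j hj
    have hinvpos : (0:ℝ) < (1 + 1 / L j)⁻¹ := inv_pos.mpr (hfacpos j)
    have h := Real.log_le_sub_one_of_pos hinvpos
    rw [Real.log_inv] at h
    have h14 : (1:ℝ)/4 ≤ 1 / L j := one_div_le_one_div_of_le (hLpos j) hj
    have hinv : (1 + 1 / L j)⁻¹ ≤ 4/5 := by
      rw [inv_le_comm₀ (hfacpos j) (by norm_num)]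
      linarith
    rw [hLrec j]; linarith
  have hL14 : ∀ j : ℕ, 4 ≤ L j ∨ 1.38 + (j:ℝ) * (1/5) ≤ L j := by
    intro j
    induction j with
    | zero => right; simpa using hL 0
    | succ n ih =>
      rcases le_or_gt 4 (L n) with h4 | h4
      · left; exact le_trans h4 (hLmono n)
      · rcases ih with h | h
        · linarith
        · right
          have := hLlow n (le_of_lt h4)
          push_cast
          linarith
  have hLbig : ∀ j, 14 ≤ j → 4 ≤ L j := by
    intro j hj
    rcases hL14 j with h | h
    · exact h
    · have : (14:ℝ) ≤ (j:ℝ) := by exact_mod_cast hj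
      nlinarith
  -- key1 : g(j+1) ≤ 4 g j always
  have key1 : ∀ j, L (j+1)^2 / y (j+1) ≤ 4 * (L j ^2 / y j) := by
    intro j
    rw [show (4:ℝ) * (L j ^2 / y j) = 4 * L j ^2 / y j by ring,
      div_le_div_iff₀ (hypos (j+1)) (hypos j)]
    have h73 : 1 / L j ≤ 0.73 := by
      rw [div_le_iff₀ (hLpos j)]
      nlinarith [hL j]
    have ha : L (j+1) ≤ L j + 0.73 := le_trans (hLup j) (by linarith)
    have hsq : L (j+1)^2 ≤ (2 * L j)^2 := by nlinarith [hLpos (j+1), hL j]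
    nlinarith [hymono j, hypos j, sq_nonneg (L j), hLpos j]
  -- key2 : in the good regime L j ≥ 4
  have key2 : ∀ j, 4 ≤ L j →
      L j / y j + 8 * (L (j+1)^2 / y (j+1)) ≤ 8 * (L j ^2 / y j) := by
    intro j hj
    have hstep : L (j+1)^2 / y (j+1) ≤ (L j ^2 - L j / 8) / y j := by
      rw [div_le_div_iff₀ (hypos (j+1)) (hypos j), hrec j]
      have hfac2 : (L j ^2 - L j / 8) * (y j * (1 + 1 / L j))
          = (L j ^2 + 7/8 * L j - 1/8) * y j := by
        field_simp
        ring
      rw [hfac2]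
      have h14 : 1 / L j ≤ 1/4 := one_div_le_one_div_of_le (by norm_num) hj
      have ha : L (j+1) ≤ L j + 1/4 := le_trans (hLup j) (by linarith)
      have hsq : L (j+1)^2 ≤ (L j + 1/4)^2 := by nlinarith [hLpos (j+1)]
      nlinarith [hypos j, hj]
    have heq : L j / y j + 8 * ((L j ^2 - L j / 8) / y j) = 8 * (L j ^2 / y j) := by
      ring
    linarith
  -- main induction
  have main : ∀ n, ∑ j ∈ Finset.range n, L j / y j + 8 * (L n ^2 / y n)
      ≤ 8 * 5 ^ (min n 14) * (L 0 ^2 / y 0) := by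
    intro n
    induction n with
    | zero => simp
    | succ n ih =>
      have hg0 : (0:ℝ) ≤ L 0 ^2 / y 0 := div_nonneg (sq_nonneg _) (hypos 0).le
      have hpow : (5:ℝ) ^ (min n 14) ≤ 5 ^ (min (n+1) 14) :=
        pow_le_pow_right₀ (by norm_num) (min_le_min (Nat.le_succ n) le_rfl)
      rw [Finset.sum_range_succ]
      rcases le_or_gt 4 (L n) with h4 | h4
      · have h := key2 n h4
        calc ∑ j ∈ Finset.range n, L j / y j + L n / y n + 8 * (L (n+1)^2 / y (n+1))
            ≤ ∑ j ∈ Finset.range n, L j / y j + 8 * (L n ^2 / y n) := by linarith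
          _ ≤ 8 * 5 ^ (min n 14) * (L 0 ^2 / y 0) := ih
          _ ≤ 8 * 5 ^ (min (n+1) 14) * (L 0 ^2 / y 0) := by nlinarith
      · have hn14 : n < 14 := by
          by_contra hc
          push_neg at hc
          exact absurd (hLbig n hc) (not_le.mpr h4)
        have hmin0 : min n 14 = n := min_eq_left (by omega)
        have hmin1 : min (n+1) 14 = n + 1 := min_eq_left (by omega)
        rw [hmin1]
        rw [hmin0] at ih
        have hterm : L n / y n ≤ L n ^2 / y n := by
          rw [div_le_div_iff_of_pos_right (hypos n)]
          nlinarith [hL n]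
        have hgstep := key1 n
        have hg : (0:ℝ) ≤ L n ^2 / y n := div_nonneg (sq_nonneg _) (hypos n).le
        have hS : (0:ℝ) ≤ ∑ j ∈ Finset.range n, L j / y j :=
          Finset.sum_nonneg fun j _ => div_nonneg (hLpos j).le (hypos j).le
        have hgle : L n ^2 / y n ≤ 5 ^ n * (L 0 ^2 / y 0) := by linarith
        have hpow5 : (5:ℝ) ^ (n+1) = 5 ^ n * 5 := pow_succ 5 n
        calc ∑ j ∈ Finset.range n, L j / y j + L n / y n + 8 * (L (n+1)^2 / y (n+1))
            ≤ ∑ j ∈ Finset.range n, L j / y j + 8 * (L n ^2 / y n)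
              + 25 * (L n ^2 / y n) := by linarith
          _ ≤ 8 * 5 ^ n * (L 0 ^2 / y 0) + 25 * (5 ^ n * (L 0 ^2 / y 0)) := by linarith
          _ ≤ 8 * 5 ^ (n+1) * (L 0 ^2 / y 0) := by
              rw [hpow5]
              nlinarith [pow_pos (show (0:ℝ) < 5 by norm_num) n]
  have hpartial : ∀ n, ∑ j ∈ Finset.range n, L j / y j ≤ 8 * 5 ^ 14 * (L 0 ^2 / y 0) := by
    intro n
    have h := main n
    have hg : (0:ℝ) ≤ L n ^2 / y n := div_nonneg (sq_nonneg _) (hypos n).le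
    have hg0 : (0:ℝ) ≤ L 0 ^2 / y 0 := div_nonneg (sq_nonneg _) (hypos 0).le
    have hpow : (5:ℝ) ^ (min n 14) ≤ 5 ^ 14 :=
      pow_le_pow_right₀ (by norm_num) (min_le_right _ _)
    nlinarith
  have hnn : ∀ n, (0:ℝ) ≤ L n / y n := fun n => div_nonneg (hLpos n).le (hypos n).le
  have hsum : Summable fun j => L j / y j := summable_of_sum_range_le hnn hpartial
  calc ∑' j, L j / y j ≤ 8 * 5 ^ 14 * (L 0 ^2 / y 0) :=
        Summable.tsum_le_of_sum_range_le hsum hpartial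
    _ = 8 * 5 ^ 14 * L 0 ^ 2 / y 0 := by ring
end

section
/- Let $y_0 \geq 4$, set $x = 4(\log y_0)^2$ (so that $y_0 = e^{\frac{1}{2}\sqrt{x}}$), and define $y_{j+1} = y_j(1 + 1/\log y_j)$. Then for all $j \geq 0$, $y_j \geq e^{\frac{1}{2}\sqrt{x + j}}$. -/
/-!
Put `L_j = log y_j`. The recursion gives `L_{j+1} = L_j + log (1 + 1/L_j) ≥ L_j + 1/(L_j + 1)`,
and squaring shows that `L_j²` grows by at least `1/4` per step, so `(2 L_j)² ≥ 4 L_0² + j`.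
-/

open Real

lemma inv_add_one_le_log_one_add_inv {L : ℝ} (hL : 0 < L) : 1 / (L + 1) ≤ log (1 + 1 / L) := by
  have h := one_sub_inv_le_log_of_pos (x := 1 + 1 / L) (by positivity)
  have hinv : 1 - (1 + 1 / L)⁻¹ = 1 / (L + 1) := by field_simp; ring
  rwa [hinv] at h

lemma sq_add_quarter_le_sq_add_inv {L : ℝ} (hL : 0 ≤ L) : L ^ 2 + 1 / 4 ≤ (L + 1 / (L + 1)) ^ 2 := by
  have hL1 : 0 < L + 1 := by linarith
  have key : (L + 1 / (L + 1)) ^ 2 - L ^ 2 - 1 / 4 = (7 * L ^ 2 + 6 * L + 3) / (4 * (L + 1) ^ 2) := by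
    field_simp; ring
  have : 0 ≤ (7 * L ^ 2 + 6 * L + 3) / (4 * (L + 1) ^ 2) := by positivity
  linarith

section Recursion

variable {y : ℕ → ℝ} (hrec : ∀ j, y (j + 1) = y j * (1 + 1 / log (y j)))
include hrec

lemma one_lt_of_one_lt_zero (h0 : 1 < y 0) : ∀ j, 1 < y j
  | 0 => h0
  | j + 1 => by
    have hj := one_lt_of_one_lt_zero h0 j
    have : 0 < 1 / log (y j) := one_div_pos.mpr (log_pos hj)
    rw [hrec j]
    nlinarith

lemma log_succ_eq {j : ℕ} (hj : 1 < y j) :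
    log (y (j + 1)) = log (y j) + log (1 + 1 / log (y j)) := by
  have : 0 < 1 / log (y j) := one_div_pos.mpr (log_pos hj)
  rw [hrec j, log_mul (by positivity) (by positivity)]

lemma log_sq_add_le (h0 : 1 < y 0) : ∀ j : ℕ, log (y 0) ^ 2 + j / 4 ≤ log (y j) ^ 2
  | 0 => by simp
  | j + 1 => by
    have hj := one_lt_of_one_lt_zero hrec h0 j
    have hL := log_pos hj
    have ih := log_sq_add_le h0 j
    have hstep : log (y j) + 1 / (log (y j) + 1) ≤ log (y (j + 1)) := by
      rw [log_succ_eq hrec hj]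
      linarith [inv_add_one_le_log_one_add_inv hL]
    have hsq := pow_le_pow_left₀ (by positivity) hstep 2
    have := sq_add_quarter_le_sq_add_inv hL.le
    push_cast
    linarith

end Recursion

/-- Inductive lower bound in Lemma "basic": with `x = 4 (log y₀)²` (so `y₀ = e^{√x/2}`)
and `y_{j+1} = y_j (1 + 1/log y_j)`, one has `y_j ≥ e^{√(x+j)/2}` for all `j`. -/
theorem stmt2 (y : ℕ → ℝ) (h0 : 4 ≤ y 0)
    (hrec : ∀ j, y (j + 1) = y j * (1 + 1 / Real.log (y j))) :
    ∀ j : ℕ, Real.exp ((1 / 2) * Real.sqrt (4 * (Real.log (y 0)) ^ 2 + j)) ≤ y j := by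
  intro j
  have hy0 : 1 < y 0 := by linarith
  have hyj := one_lt_of_one_lt_zero hrec hy0 j
  have hsqrt : sqrt (4 * log (y 0) ^ 2 + j) ≤ 2 * log (y j) := by
    rw [sqrt_le_left (by linarith [log_pos hyj])]
    linarith [log_sq_add_le hrec hy0 j]
  calc exp (1 / 2 * sqrt (4 * log (y 0) ^ 2 + j)) ≤ exp (log (y j)) := exp_le_exp.mpr (by linarith)
    _ = y j := exp_log (by linarith)
end

section
/- Let $\varepsilon, \mu \in (0,1]$ with $16\mu \leq \varepsilon$, let $\tilde{\varepsilon} = \varepsilon(1 + 2\mu^{1/2})$, and let $\delta = 2\sqrt{\tilde{\varepsilon}\mu}$. Let $\tilde{u}$ solve $u'' = \tilde{\varepsilon} \sin u$ with $\tilde{u}(0) = \pi$ and $\tilde{u}'(0) = 2\sqrt{\tilde{\varepsilon}}(1 + \delta^2)$, and let $u^{(\tilde{\varepsilon})}(t) = 4\arctan(e^{\sqrt{\tilde{\varepsilon}}\, t})$ be the separatrix. Then $\tilde{u}(t) \geq u^{(\tilde{\varepsilon})}(t)$ for all $t \geq 0$, and the difference $w(t) = \tilde{u}(t) - u^{(\tilde{\varepsilon})}(t)$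 is nondecreasing on $[0,\infty)$ and satisfies the differential inequality $w''(t) \leq \tilde{\varepsilon}\, w(t)$ for $t \geq 0$. -/
open Real Set



lemma pend_sin_two_arctan (y : ℝ) :
    Real.sin (2 * Real.arctan y) = 2 * y / (1 + y ^ 2) := by
  have h1 : (0:ℝ) < 1 + y ^ 2 := by positivity
  have hs : Real.sqrt (1 + y ^ 2) ^ 2 = 1 + y ^ 2 := Real.sq_sqrt h1.le
  have hs0 : Real.sqrt (1 + y ^ 2) ≠ 0 := by positivity
  rw [two_mul, Real.sin_add, Real.sin_arctan, Real.cos_arctan]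
  field_simp
  rw [hs]; ring

lemma pend_cos_two_arctan (y : ℝ) :
    Real.cos (2 * Real.arctan y) = (1 - y ^ 2) / (1 + y ^ 2) := by
  have h1 : (0:ℝ) < 1 + y ^ 2 := by positivity
  have hs : Real.sqrt (1 + y ^ 2) ^ 2 = 1 + y ^ 2 := Real.sq_sqrt h1.le
  have hs0 : Real.sqrt (1 + y ^ 2) ≠ 0 := by positivity
  rw [two_mul, Real.cos_add, Real.sin_arctan, Real.cos_arctan]
  field_simp
  nlinarith [hs]

lemma pend_sin_four_arctan (y : ℝ) :
    Real.sin (4 * Real.arctan y) = 4 * y * (1 - y ^ 2) / (1 + y ^ 2) ^ 2 := by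
  have h1 : (0:ℝ) < 1 + y ^ 2 := by positivity
  have h4 : (4:ℝ) * Real.arctan y = 2 * (2 * Real.arctan y) := by ring
  rw [h4, Real.sin_two_mul, pend_sin_two_arctan, pend_cos_two_arctan]
  field_simp
  ring

lemma pend_sin_sub_sin_le {a b : ℝ} (h : b ≤ a) : Real.sin a - Real.sin b ≤ a - b := by
  have key : ∀ x : ℝ, 0 ≤ x → |Real.sin x| ≤ x := by
    intro x hx
    rcases eq_or_lt_of_le hx with rfl | hx'
    · simp
    rcases le_or_gt x 1 with hx1 | hx1
    · have hxpi : x ≤ Real.pi := hx1.trans (by linarith [Real.pi_gt_three])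
      rw [abs_of_nonneg (Real.sin_nonneg_of_nonneg_of_le_pi hx hxpi)]
      exact (Real.sin_lt hx').le
    · exact (Real.abs_sin_le_one x).trans hx1.le
  have h2 : Real.sin a - Real.sin b = 2 * Real.sin ((a - b)/2) * Real.cos ((a + b)/2) :=
    Real.sin_sub_sin a b
  have h3 : 0 ≤ (a - b)/2 := by linarith
  have h4 := key _ h3
  have h5 : |Real.cos ((a + b)/2)| ≤ 1 := Real.abs_cos_le_one _
  calc Real.sin a - Real.sin b = 2 * (Real.sin ((a - b)/2) * Real.cos ((a + b)/2)) := by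
        rw [h2]; ring
    _ ≤ 2 * ((a - b)/2) := by
        have : Real.sin ((a - b)/2) * Real.cos ((a + b)/2) ≤ (a - b)/2 := by
          calc Real.sin ((a - b)/2) * Real.cos ((a + b)/2)
              ≤ |Real.sin ((a - b)/2)| * |Real.cos ((a + b)/2)| := by
                rw [← abs_mul]; exact le_abs_self _
            _ ≤ ((a - b)/2) * 1 := by
                apply mul_le_mul h4 h5 (abs_nonneg _) (by linarith [key _ h3, abs_nonneg (Real.sin ((a-b)/2))])
            _ = (a - b)/2 := by ring
        linarith
    _ = a - b := by ring

lemma pend_hasDerivAt_sep (l t : ℝ) :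
    HasDerivAt (fun t => 4 * Real.arctan (Real.exp (l * t)))
      (4 * l * Real.exp (l * t) / (1 + (Real.exp (l * t)) ^ 2)) t := by
  have h1 : HasDerivAt (fun t : ℝ => l * t) l t := by
    simpa using (hasDerivAt_id t).const_mul l
  have h2 : HasDerivAt (fun t : ℝ => Real.exp (l * t)) (Real.exp (l * t) * l) t :=
    (Real.hasDerivAt_exp (l * t)).comp t h1
  have h3 := ((Real.hasDerivAt_arctan (Real.exp (l * t))).comp t h2).const_mul 4
  refine h3.congr_deriv (Eq.symm ?_)
  field_simp

lemma pend_hasDerivAt_sep' (l t : ℝ) :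
    HasDerivAt (fun t => 4 * l * Real.exp (l * t) / (1 + (Real.exp (l * t)) ^ 2))
      (4 * l ^ 2 * Real.exp (l * t) * (1 - (Real.exp (l * t)) ^ 2) / (1 + (Real.exp (l * t)) ^ 2) ^ 2) t := by
  have h1 : HasDerivAt (fun t : ℝ => l * t) l t := by
    simpa using (hasDerivAt_id t).const_mul l
  have h2 : HasDerivAt (fun t : ℝ => Real.exp (l * t)) (Real.exp (l * t) * l) t :=
    (Real.hasDerivAt_exp (l * t)).comp t h1
  have hn : HasDerivAt (fun t : ℝ => 4 * l * Real.exp (l * t)) (4 * l * (Real.exp (l * t) * l)) t :=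
    h2.const_mul (4 * l)
  have hd : HasDerivAt (fun t : ℝ => 1 + (Real.exp (l * t)) ^ 2)
      (2 * Real.exp (l * t) * (Real.exp (l * t) * l)) t := by
    have := (h2.pow 2).const_add 1
    refine this.congr_deriv (Eq.symm ?_)
    ring
  have hd0 : (1 + (Real.exp (l * t)) ^ 2) ≠ 0 := by positivity
  have := hn.div hd hd0
  refine this.congr_deriv (Eq.symm ?_)
  field_simp
  ring


lemma pend_core (l K : ℝ) (hl : 0 < l) (hK : 0 < K) (θ : ℝ → ℝ)
    (hθ : ∀ t, HasDerivAt θ (l * Real.sqrt ((Real.sin (θ t)) ^ 2 + K)) t)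
    (hθ0 : θ 0 = Real.pi / 2) :
    ∀ t ≥ (0:ℝ), 1 / Real.cosh (l * t) ≤ Real.sqrt ((Real.sin (θ t)) ^ 2 + K) := by
  set S1 : ℝ → ℝ := fun t => Real.sin (θ t) with hS1def
  set C1 : ℝ → ℝ := fun t => Real.cos (θ t) with hC1def
  set Q : ℝ → ℝ := fun t => S1 t ^ 2 + K with hQdef
  set q : ℝ → ℝ := fun t => Real.sqrt (Q t) with hqdef
  have hQe : ∀ t, Q t = S1 t ^ 2 + K := fun t => rfl
  have hQpos : ∀ t, 0 < Q t := fun t => by rw [hQe t]; positivity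
  have hqpos : ∀ t, 0 < q t := fun t => Real.sqrt_pos.mpr (hQpos t)
  have hq2 : ∀ t, q t ^ 2 = Q t := fun t => Real.sq_sqrt (hQpos t).le
  have hpyth : ∀ t, S1 t ^ 2 + C1 t ^ 2 = 1 := fun t => Real.sin_sq_add_cos_sq (θ t)
  have hS1' : ∀ t, HasDerivAt S1 (C1 t * (l * q t)) t :=
    fun t => (Real.hasDerivAt_sin (θ t)).comp t (hθ t)
  have hC1' : ∀ t, HasDerivAt C1 (-S1 t * (l * q t)) t :=
    fun t => (Real.hasDerivAt_cos (θ t)).comp t (hθ t)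
  have hQ' : ∀ t, HasDerivAt Q (2 * S1 t * (C1 t * (l * q t))) t := by
    intro t
    have := ((hS1' t).pow 2).add_const K
    refine this.congr_deriv (Eq.symm ?_)
    ring
  -- B function
  set B : ℝ → ℝ := fun t => -(S1 t * C1 t) / q t with hBdef
  have hBq : ∀ t, B t * q t = -(S1 t * C1 t) := by
    intro t
    exact div_mul_cancel₀ _ (hqpos t).ne'
  have hB2lt : ∀ t, (B t) ^ 2 < 1 := by
    intro t
    have h1 : (B t) ^ 2 = S1 t ^ 2 * C1 t ^ 2 / q t ^ 2 := by
      rw [hBdef]; field_simp [(hqpos t).ne']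
    rw [h1, hq2 t, div_lt_one (hQpos t), hQe t]
    have hC1le : C1 t ^ 2 ≤ 1 := by nlinarith [hpyth t, sq_nonneg (S1 t)]
    nlinarith [mul_le_mul_of_nonneg_left hC1le (sq_nonneg (S1 t)), hK]
  have hB1p : ∀ t, 0 < 1 + B t := by
    intro t; nlinarith [hB2lt t]
  have hB1m : ∀ t, 0 < 1 - B t := by
    intro t; nlinarith [hB2lt t]
  have hB' : ∀ t, HasDerivAt B
      (l * (1 - (B t) ^ 2) - 2 * l * K * (C1 t) ^ 2 / q t ^ 2) t := by
    intro t
    have hq' : HasDerivAt q (l * (S1 t * C1 t)) t := by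
      have := (Real.hasDerivAt_sqrt (hQpos t).ne').comp t (hQ' t)
      refine this.congr_deriv (Eq.symm ?_)
      rw [show Real.sqrt (Q t) = q t from rfl]
      field_simp [(hqpos t).ne']
    have hnum : HasDerivAt (fun t => -(S1 t * C1 t))
        (-(C1 t * (l * q t) * C1 t + S1 t * (-S1 t * (l * q t)))) t :=
      ((hS1' t).mul (hC1' t)).neg
    have := hnum.div hq' (hqpos t).ne'
    refine this.congr_deriv (Eq.symm ?_)
    have hBt : (B t) ^ 2 = S1 t ^ 2 * C1 t ^ 2 / q t ^ 2 := by
      rw [hBdef]; field_simp [(hqpos t).ne']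
    rw [hBt]
    have hKq : K = q t ^ 2 - S1 t ^ 2 := by
      have := hq2 t; rw [hQe t] at this; linarith
    rw [hKq]
    field_simp [(hqpos t).ne']
    linear_combination (-(q t ^ 2)) * hpyth t
  -- the comparison function F = log(1+B) - log(1-B) - 2 l t
  set F : ℝ → ℝ := fun t => Real.log (1 + B t) - Real.log (1 - B t) - 2 * l * t with hFdef
  have hF' : ∀ t, HasDerivAt F
      ((l * (1 - (B t) ^ 2) - 2 * l * K * (C1 t) ^ 2 / q t ^ 2) / (1 + B t)
        + (l * (1 - (B t) ^ 2) - 2 * l * K * (C1 t) ^ 2 / q t ^ 2) / (1 - B t) - 2 * l) t := by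
    intro t
    set D := l * (1 - (B t) ^ 2) - 2 * l * K * (C1 t) ^ 2 / q t ^ 2 with hDdef
    have h1 : HasDerivAt (fun t => 1 + B t) D t := (hB' t).const_add 1
    have h2 : HasDerivAt (fun t => Real.log (1 + B t)) (D / (1 + B t)) t := by
      have := (Real.hasDerivAt_log (hB1p t).ne').comp t h1
      refine this.congr_deriv (Eq.symm ?_)
      field_simp
    have h3 : HasDerivAt (fun t => 1 - B t) (-D) t := (hB' t).const_sub 1
    have h4 : HasDerivAt (fun t => Real.log (1 - B t)) (-D / (1 - B t)) t := by
      have := (Real.hasDerivAt_log (hB1m t).ne').comp t h3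
      refine this.congr_deriv (Eq.symm ?_)
      field_simp
    have h5 : HasDerivAt (fun t : ℝ => 2 * l * t) (2 * l) t := by
      simpa using (hasDerivAt_id t).const_mul (2 * l)
    have := (h2.sub h4).sub h5
    refine this.congr_deriv (Eq.symm ?_)
    ring
  have hF'nonpos : ∀ t, (l * (1 - (B t) ^ 2) - 2 * l * K * (C1 t) ^ 2 / q t ^ 2) / (1 + B t)
        + (l * (1 - (B t) ^ 2) - 2 * l * K * (C1 t) ^ 2 / q t ^ 2) / (1 - B t) - 2 * l ≤ 0 := by
    intro t
    set D := l * (1 - (B t) ^ 2) - 2 * l * K * (C1 t) ^ 2 / q t ^ 2 with hDdef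
    have h1m2 : 0 < 1 - (B t) ^ 2 := by nlinarith [hB2lt t]
    have hDle : D ≤ l * (1 - (B t) ^ 2) := by
      have : 0 ≤ 2 * l * K * (C1 t) ^ 2 / q t ^ 2 := by positivity
      rw [hDdef]; linarith
    have hcomb : D / (1 + B t) + D / (1 - B t) = 2 * D / (1 - (B t) ^ 2) := by
      field_simp [(hB1p t).ne', (hB1m t).ne']
      ring
    rw [hcomb, sub_nonpos, div_le_iff₀ h1m2]
    nlinarith [hDle]
  have hFdiff : Differentiable ℝ F := fun t => (hF' t).differentiableAt
  have hFanti : AntitoneOn F (Ici 0) := by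
    apply antitoneOn_of_deriv_nonpos (convex_Ici 0) hFdiff.continuous.continuousOn
      hFdiff.differentiableOn
    intro x _
    rw [(hF' x).deriv]
    exact hF'nonpos x
  have hB0 : B 0 = 0 := by
    rw [hBdef]
    simp [hC1def, hθ0, Real.cos_pi_div_two]
  have hF0 : F 0 = 0 := by
    rw [hFdef]; simp [hB0]
  have hFle : ∀ t ≥ (0:ℝ), F t ≤ 0 := by
    intro t ht
    have := hFanti (self_mem_Ici) ht ht
    rwa [hF0] at this
  -- B t cosh ≤ sinh
  have hBsinh : ∀ t ≥ (0:ℝ), B t * Real.cosh (l * t) ≤ Real.sinh (l * t) := by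
    intro t ht
    have hFt := hFle t ht
    have hlog : Real.log (1 + B t) ≤ 2 * l * t + Real.log (1 - B t) := by
      rw [hFdef] at hFt; dsimp only at hFt; linarith
    have h1 : 1 + B t ≤ Real.exp (2 * l * t) * (1 - B t) := by
      have := Real.exp_le_exp.mpr hlog
      rwa [Real.exp_log (hB1p t), Real.exp_add, Real.exp_log (hB1m t)] at this
    have hE : 0 < Real.exp (l * t) := Real.exp_pos _
    have hE2 : Real.exp (2 * l * t) = Real.exp (l * t) ^ 2 := by
      rw [sq, ← Real.exp_add]; congr 1; ring
    have hexpand : Real.sinh (l * t) - B t * Real.cosh (l * t)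
        = (Real.exp (l * t) ^ 2 * (1 - B t) - (1 + B t)) / (2 * Real.exp (l * t)) := by
      rw [Real.sinh_eq, Real.cosh_eq, Real.exp_neg]
      field_simp
      ring
    have : 0 ≤ Real.sinh (l * t) - B t * Real.cosh (l * t) := by
      rw [hexpand]
      apply div_nonneg _ (by positivity)
      rw [hE2] at h1
      linarith
    linarith
  -- L function
  set L : ℝ → ℝ := fun t => Q t * Real.cosh (l * t) ^ 2 with hLdef
  have hcosh' : ∀ t : ℝ, HasDerivAt (fun t : ℝ => Real.cosh (l * t)) (Real.sinh (l * t) * l) t := by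
    intro t
    have h1 : HasDerivAt (fun t : ℝ => l * t) l t := by
      simpa using (hasDerivAt_id t).const_mul l
    exact (Real.hasDerivAt_cosh (l * t)).comp t h1
  have hL' : ∀ t, HasDerivAt L
      (2 * S1 t * (C1 t * (l * q t)) * Real.cosh (l * t) ^ 2
        + Q t * (2 * Real.cosh (l * t) * (Real.sinh (l * t) * l))) t := by
    intro t
    have := (hQ' t).mul ((hcosh' t).pow 2)
    refine this.congr_deriv (Eq.symm ?_)
    simp only [Pi.pow_apply]; ring
  have hL'nonneg : ∀ t ≥ (0:ℝ), 0 ≤ 2 * S1 t * (C1 t * (l * q t)) * Real.cosh (l * t) ^ 2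
        + Q t * (2 * Real.cosh (l * t) * (Real.sinh (l * t) * l)) := by
    intro t ht
    have hSC : S1 t * C1 t = -(B t * q t) := by linarith [hBq t]
    have hrw : 2 * S1 t * (C1 t * (l * q t)) * Real.cosh (l * t) ^ 2
        + Q t * (2 * Real.cosh (l * t) * (Real.sinh (l * t) * l))
        = 2 * l * Real.cosh (l * t) * (q t ^ 2 *
            (Real.sinh (l * t) - B t * Real.cosh (l * t))) := by
      rw [← hq2 t]
      calc 2 * S1 t * (C1 t * (l * q t)) * Real.cosh (l * t) ^ 2
            + q t ^ 2 * (2 * Real.cosh (l * t) * (Real.sinh (l * t) * l))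
          = 2 * l * q t * Real.cosh (l * t) ^ 2 * (S1 t * C1 t)
            + q t ^ 2 * (2 * Real.cosh (l * t) * (Real.sinh (l * t) * l)) := by ring
        _ = 2 * l * q t * Real.cosh (l * t) ^ 2 * (-(B t * q t))
            + q t ^ 2 * (2 * Real.cosh (l * t) * (Real.sinh (l * t) * l)) := by rw [hSC]
        _ = 2 * l * Real.cosh (l * t) * (q t ^ 2 *
            (Real.sinh (l * t) - B t * Real.cosh (l * t))) := by ring
    rw [hrw]
    have h1 := hBsinh t ht
    have h4 : 0 ≤ Real.sinh (l * t) - B t * Real.cosh (l * t) := by linarith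
    have h5 : 0 ≤ 2 * l * Real.cosh (l * t) := by positivity
    exact mul_nonneg h5 (mul_nonneg (sq_nonneg _) h4)
  have hLdiff : Differentiable ℝ L := fun t => (hL' t).differentiableAt
  have hLmono : MonotoneOn L (Ici 0) := by
    apply monotoneOn_of_deriv_nonneg (convex_Ici 0) hLdiff.continuous.continuousOn
      hLdiff.differentiableOn
    intro x hx
    rw [interior_Ici] at hx
    rw [(hL' x).deriv]
    exact hL'nonneg x (le_of_lt hx)
  have hL0 : L 0 = 1 + K := by
    rw [hLdef]
    simp only [hQe 0, hS1def, hθ0, Real.sin_pi_div_two, mul_zero, Real.cosh_zero]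
    norm_num
  intro t ht
  have hLt : 1 + K ≤ L t := by rw [← hL0]; exact hLmono self_mem_Ici ht ht
  have hcosh := Real.cosh_pos (l * t)
  have hQt : (1 / Real.cosh (l * t)) ^ 2 ≤ Q t := by
    rw [div_pow, one_pow, div_le_iff₀ (by positivity)]
    have hLe : L t = Q t * Real.cosh (l * t) ^ 2 := rfl
    nlinarith [hK]
  calc 1 / Real.cosh (l * t) = Real.sqrt ((1 / Real.cosh (l * t)) ^ 2) := by
        rw [Real.sqrt_sq (by positivity)]
    _ ≤ Real.sqrt (Q t) := Real.sqrt_le_sqrt hQt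

/-- Lemma "pendulum" (comparison with the separatrix): with `ε̃ = ε(1 + 2√μ)` and
`δ = 2√(ε̃ μ)`, the solution `uT` of `u'' = ε̃ sin u` with `uT(0) = π`,
`uT'(0) = 2√ε̃ (1 + δ²)` stays above the separatrix `u^{(ε̃)}(t) = 4 arctan(e^{√ε̃ t})`
for `t ≥ 0`, the difference `w = uT - u^{(ε̃)}` is nondecreasing on `[0,∞)`, and
`w'' ≤ ε̃ w` there. -/
theorem stmt10 (ε μ : ℝ) (hε : ε ∈ Set.Ioc 0 1) (hμ : μ ∈ Set.Ioc 0 1)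
    (hεμ : 16 * μ ≤ ε)
    (uT : ℝ → ℝ) (hC2 : ContDiff ℝ 2 uT)
    (hode : ∀ t, deriv (deriv uT) t = (ε * (1 + 2 * Real.sqrt μ)) * Real.sin (uT t))
    (h0 : uT 0 = Real.pi)
    (h0' : deriv uT 0 = 2 * Real.sqrt (ε * (1 + 2 * Real.sqrt μ)) *
      (1 + (2 * Real.sqrt ((ε * (1 + 2 * Real.sqrt μ)) * μ)) ^ 2)) :
    (∀ t ≥ (0:ℝ),
      4 * Real.arctan (Real.exp (Real.sqrt (ε * (1 + 2 * Real.sqrt μ)) * t)) ≤ uT t) ∧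
    MonotoneOn (fun t => uT t -
      4 * Real.arctan (Real.exp (Real.sqrt (ε * (1 + 2 * Real.sqrt μ)) * t))) (Set.Ici 0) ∧
    ∀ t ≥ (0:ℝ),
      deriv (deriv (fun t' => uT t' -
        4 * Real.arctan (Real.exp (Real.sqrt (ε * (1 + 2 * Real.sqrt μ)) * t')))) t ≤
      (ε * (1 + 2 * Real.sqrt μ)) *
        (uT t - 4 * Real.arctan (Real.exp (Real.sqrt (ε * (1 + 2 * Real.sqrt μ)) * t))) := by
  obtain ⟨hε0, hε1⟩ := hε
  obtain ⟨hμ0, hμ1⟩ := hμ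
  set e := ε * (1 + 2 * Real.sqrt μ) with he_def
  have he : 0 < e := by
    have h1 : 0 < 1 + 2 * Real.sqrt μ := by positivity
    exact mul_pos hε0 h1
  set l := Real.sqrt e with hl_def
  have hl : 0 < l := Real.sqrt_pos.mpr he
  have hl2 : l ^ 2 = e := Real.sq_sqrt he.le
  set δ := 2 * Real.sqrt (e * μ) with hδ_def
  have hem : 0 < e * μ := mul_pos he hμ0
  have hδ : 0 < δ := by rw [hδ_def]; positivity
  set K := (1 + δ ^ 2) ^ 2 - 1 with hK_def
  have hK : 0 < K := by rw [hK_def]; nlinarith [pow_pos hδ 2]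
  -- differentiability
  have hd1 : Differentiable ℝ uT := hC2.differentiable (by norm_num)
  have hC2' : ContDiff ℝ (1 + 1) uT := by
    convert hC2 using 2
    norm_num
  have hcd1 : ContDiff ℝ 1 (deriv uT) := (contDiff_succ_iff_deriv.mp hC2').2.2
  have hd2 : Differentiable ℝ (deriv uT) := hcd1.differentiable one_ne_zero
  -- energy conservation
  set Eng : ℝ → ℝ := fun t => (deriv uT t) ^ 2 - 2 * e * (1 - Real.cos (uT t)) with hEng_def
  have hEng' : ∀ t, HasDerivAt Eng 0 t := by
    intro t
    have h1 : HasDerivAt (deriv uT) (deriv (deriv uT) t) t := (hd2 t).hasDerivAt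
    have h2 : HasDerivAt uT (deriv uT t) t := (hd1 t).hasDerivAt
    have h3 : HasDerivAt (fun t => (deriv uT t) ^ 2)
        (2 * deriv uT t * deriv (deriv uT) t) t := by
      have := h1.pow 2
      refine this.congr_deriv (Eq.symm ?_)
      ring
    have h4 : HasDerivAt (fun t => Real.cos (uT t)) (-Real.sin (uT t) * deriv uT t) t :=
      (Real.hasDerivAt_cos (uT t)).comp t h2
    have h5 : HasDerivAt (fun t => 2 * e * (1 - Real.cos (uT t)))
        (2 * e * -(-Real.sin (uT t) * deriv uT t)) t := (h4.const_sub 1).const_mul (2 * e)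
    have h6 := h3.sub h5
    refine h6.congr_deriv (Eq.symm ?_)
    rw [hode t]
    ring
  have hEconst : ∀ t, Eng t = Eng 0 := by
    intro t
    have hdiff : Differentiable ℝ Eng := fun s => (hEng' s).differentiableAt
    exact is_const_of_deriv_eq_zero hdiff (fun s => (hEng' s).deriv) t 0
  have hEng0 : Eng 0 = 4 * e * K := by
    simp only [hEng_def]
    rw [h0', h0, Real.cos_pi, hK_def]
    linear_combination (4 * (1 + δ ^ 2) ^ 2) * hl2
  have hsq : ∀ t, (deriv uT t) ^ 2 = 4 * e * ((Real.sin (uT t / 2)) ^ 2 + K) := by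
    intro t
    have h1 := hEconst t
    rw [hEng0] at h1
    simp only [hEng_def] at h1
    have h2 : Real.sin (uT t / 2) ^ 2 = 1 / 2 - Real.cos (2 * (uT t / 2)) / 2 :=
      Real.sin_sq_eq_half_sub _
    rw [show 2 * (uT t / 2) = uT t by ring] at h2
    linear_combination h1 - 4 * e * h2
  have h0pos : 0 < deriv uT 0 := by rw [h0']; positivity
  have hpos : ∀ t, 0 < deriv uT t := by
    intro t
    rcases lt_trichotomy (deriv uT t) 0 with hlt | heq | hgt
    · exfalso
      have hmem : (0:ℝ) ∈ Set.uIcc (deriv uT 0) (deriv uT t) := by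
        rw [Set.mem_uIcc]
        right
        exact ⟨hlt.le, h0pos.le⟩
      obtain ⟨s, _, hs⟩ := intermediate_value_uIcc (hd2.continuous.continuousOn) hmem
      have h1 := hsq s
      rw [hs] at h1
      nlinarith [he, hK, sq_nonneg (Real.sin (uT s / 2))]
    · exfalso
      have h1 := hsq t
      rw [heq] at h1
      nlinarith [he, hK, sq_nonneg (Real.sin (uT t / 2))]
    · exact hgt
  have hq : ∀ t, deriv uT t = 2 * l * Real.sqrt ((Real.sin (uT t / 2)) ^ 2 + K) := by
    intro t
    have h1 : (0:ℝ) ≤ (Real.sin (uT t / 2)) ^ 2 + K := by positivity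
    have h2 : (2 * l * Real.sqrt ((Real.sin (uT t / 2)) ^ 2 + K)) ^ 2
        = 4 * e * ((Real.sin (uT t / 2)) ^ 2 + K) := by
      rw [mul_pow, mul_pow, Real.sq_sqrt h1, ← hl2]
      ring
    have h4 : (0:ℝ) ≤ 2 * l * Real.sqrt ((Real.sin (uT t / 2)) ^ 2 + K) := by positivity
    calc deriv uT t = Real.sqrt ((deriv uT t) ^ 2) := (Real.sqrt_sq (hpos t).le).symm
      _ = Real.sqrt ((2 * l * Real.sqrt ((Real.sin (uT t / 2)) ^ 2 + K)) ^ 2) := by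
          rw [hsq t, h2]
      _ = 2 * l * Real.sqrt ((Real.sin (uT t / 2)) ^ 2 + K) := Real.sqrt_sq h4
  -- apply the core lemma to θ = uT/2
  have hθ' : ∀ t, HasDerivAt (fun t => uT t / 2)
      (l * Real.sqrt ((Real.sin (uT t / 2)) ^ 2 + K)) t := by
    intro t
    have := ((hd1 t).hasDerivAt).div_const 2
    refine this.congr_deriv (Eq.symm ?_)
    rw [hq t]
    ring
  have hcore : ∀ t ≥ (0:ℝ), 1 / Real.cosh (l * t)
      ≤ Real.sqrt ((Real.sin (uT t / 2)) ^ 2 + K) := by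
    have := pend_core l K hl hK (fun t => uT t / 2) (fun t => hθ' t)
      (by show uT 0 / 2 = Real.pi / 2; rw [h0])
    exact this
  have hsepcosh : ∀ t : ℝ, 4 * l * Real.exp (l * t) / (1 + (Real.exp (l * t)) ^ 2)
      = 2 * l * (1 / Real.cosh (l * t)) := by
    intro t
    have hE := Real.exp_pos (l * t)
    have hc : Real.cosh (l * t) = (Real.exp (l * t) + (Real.exp (l * t))⁻¹) / 2 := by
      rw [Real.cosh_eq, Real.exp_neg]
    rw [hc]
    field_simp
    ring
  have hvel : ∀ t ≥ (0:ℝ),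
      4 * l * Real.exp (l * t) / (1 + (Real.exp (l * t)) ^ 2) ≤ deriv uT t := by
    intro t ht
    rw [hsepcosh t, hq t]
    exact mul_le_mul_of_nonneg_left (hcore t ht) (by positivity)
  have hw' : ∀ t, HasDerivAt (fun t => uT t - 4 * Real.arctan (Real.exp (l * t)))
      (deriv uT t - 4 * l * Real.exp (l * t) / (1 + (Real.exp (l * t)) ^ 2)) t := by
    intro t
    exact ((hd1 t).hasDerivAt).sub (pend_hasDerivAt_sep l t)
  have hwdiff : Differentiable ℝ (fun t => uT t - 4 * Real.arctan (Real.exp (l * t))) :=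
    fun t => (hw' t).differentiableAt
  have hwmono : MonotoneOn (fun t => uT t - 4 * Real.arctan (Real.exp (l * t)))
      (Set.Ici 0) := by
    apply monotoneOn_of_deriv_nonneg (convex_Ici 0) hwdiff.continuous.continuousOn
      hwdiff.differentiableOn
    intro x hx
    rw [interior_Ici] at hx
    rw [(hw' x).deriv]
    have := hvel x hx.le
    linarith
  have hw0 : uT 0 - 4 * Real.arctan (Real.exp (l * 0)) = 0 := by
    rw [h0, mul_zero, Real.exp_zero, Real.arctan_one]
    ring
  have hclaim1 : ∀ t ≥ (0:ℝ), 4 * Real.arctan (Real.exp (l * t)) ≤ uT t := by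
    intro t ht
    have h := hwmono (self_mem_Ici) (show t ∈ Set.Ici (0:ℝ) from ht) ht
    simp only at h
    linarith [hw0, h]
  refine ⟨hclaim1, hwmono, ?_⟩
  intro t ht
  have hwd : (deriv (fun t' => uT t' - 4 * Real.arctan (Real.exp (l * t'))))
      = fun x => deriv uT x - 4 * l * Real.exp (l * x) / (1 + (Real.exp (l * x)) ^ 2) :=
    funext fun x => (hw' x).deriv
  rw [hwd]
  have h2' : HasDerivAt
      (fun x => deriv uT x - 4 * l * Real.exp (l * x) / (1 + (Real.exp (l * x)) ^ 2))
      (deriv (deriv uT) t - 4 * l ^ 2 * Real.exp (l * t) * (1 - (Real.exp (l * t)) ^ 2)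
        / (1 + (Real.exp (l * t)) ^ 2) ^ 2) t :=
    ((hd2 t).hasDerivAt).sub (pend_hasDerivAt_sep' l t)
  rw [h2'.deriv, hode t]
  have hsinS : 4 * l ^ 2 * Real.exp (l * t) * (1 - (Real.exp (l * t)) ^ 2)
      / (1 + (Real.exp (l * t)) ^ 2) ^ 2
      = e * Real.sin (4 * Real.arctan (Real.exp (l * t))) := by
    rw [pend_sin_four_arctan, ← hl2]
    ring
  rw [hsinS]
  have hs4 := pend_sin_sub_sin_le (hclaim1 t ht)
  have h5 := mul_le_mul_of_nonneg_left hs4 he.le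
  rw [mul_sub, mul_sub] at h5
  linarith [h5]
end

section
/- (Weighted Poincaré-type interpolation.) Let $\lambda > 0$, $\tau \in \mathbb{R}$, and let $u, u^0 : \mathbb{R} \to \mathbb{R}$ be $C^2$ functions with $\|u - u^0\|_{L^\infty(\mathbb{R})} \leq A$ for some $A > 0$, and such that the weighted norms $X = \int_{\mathbb{R}} e^{-\lambda|t-\tau|}(u'(t) - (u^0)'(t))^2 dt$ and $Y = \int_{\mathbb{R}} e^{-\lambda|t-\tau|}(u''(t) - (u^0)''(t))^2 dt$ are finite. Then there is an absolute constant $C > 0$ such that $X^2 \leq C\left( \lambda^2 A^4 + \lambda^{-1} A^2\, Y \right)$. -/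
/-!
Put `w = u - u⁰` and `ρ t = exp (-(λ |t - τ|))`. Integrating `(w w')' = w'² + w w''` against `ρ`
and using `|ρ'| = λ ρ` away from the kink at `τ` gives
`X ≤ λ A ∫ ρ |w'| + A ∫ ρ |w''|`. By Cauchy–Schwarz and `∫ ρ = 2 / λ` the right-hand side is at
most `A √(2 λ X) + A √(2 Y / λ)`, and this quadratic inequality in `√X` yields
`X² ≤ 16 (λ² A⁴ + λ⁻¹ A² Y)`.
-/

open MeasureTheory Real Set Filter Topology

section WeightedIntegrals

variable {α : Type*} [MeasurableSpace α] {μ : Measure α} {ρ h : α → ℝ}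

theorem MeasureTheory.Integrable.mul_abs_of_nonneg (hρ : ∀ x, 0 ≤ ρ x)
    (hρh : Integrable (fun x => ρ x * h x) μ) : Integrable (fun x => ρ x * |h x|) μ :=
  hρh.abs.congr (.of_forall fun x => by simp only [abs_mul, abs_of_nonneg (hρ x)])

theorem MeasureTheory.Integrable.mul_of_integrable_mul_sq (hρ : ∀ x, 0 ≤ ρ x)
    (hρi : Integrable ρ μ) (hρh : Integrable (fun x => ρ x * h x ^ 2) μ)
    (hh : AEStronglyMeasurable h μ) : Integrable (fun x => ρ x * h x) μ := by
  refine ((hρi.add hρh).div_const 2).mono' (hρi.aestronglyMeasurable.mul hh)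
    (.of_forall fun x => ?_)
  show |ρ x * h x| ≤ (ρ x + ρ x * h x ^ 2) / 2
  rw [abs_mul, abs_of_nonneg (hρ x)]
  have := mul_nonneg (hρ x) (sq_nonneg (|h x| - 1))
  rw [sub_sq, sq_abs] at this
  linarith

theorem sq_integral_mul_le (hρ : ∀ x, 0 ≤ ρ x) (hρi : Integrable ρ μ)
    (hρh : Integrable (fun x => ρ x * h x) μ) (hρh2 : Integrable (fun x => ρ x * h x ^ 2) μ) :
    (∫ x, ρ x * h x ∂μ) ^ 2 ≤ (∫ x, ρ x ∂μ) * ∫ x, ρ x * h x ^ 2 ∂μ := by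
  have hquad : ∀ s : ℝ, 0 ≤ (∫ x, ρ x ∂μ) * (s * s) + (-2 * ∫ x, ρ x * h x ∂μ) * s +
      ∫ x, ρ x * h x ^ 2 ∂μ := fun s => calc
    0 ≤ ∫ x, ρ x * (s - h x) ^ 2 ∂μ := integral_nonneg fun x => mul_nonneg (hρ x) (sq_nonneg _)
    _ = ∫ x, (s * s) * ρ x + (-2 * s) * (ρ x * h x) + ρ x * h x ^ 2 ∂μ := by
      congr 1; funext x; ring
    _ = _ := by
      rw [integral_add (f := fun x => (s * s) * ρ x + (-2 * s) * (ρ x * h x))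
          ((hρi.const_mul _).add (hρh.const_mul _)) hρh2,
        integral_add (hρi.const_mul _) (hρh.const_mul _), integral_const_mul, integral_const_mul]
      ring
  have := discrim_le_zero hquad
  rw [discrim] at this
  linarith

theorem integral_mul_abs_mul_le {w : α → ℝ} {A : ℝ} (hρ : ∀ x, 0 ≤ ρ x) (hw : ∀ x, |w x| ≤ A)
    (hρh : Integrable (fun x => ρ x * |h x|) μ) :
    ∫ x, ρ x * |w x * h x| ∂μ ≤ A * ∫ x, ρ x * |h x| ∂μ := by
  rw [← integral_const_mul]
  refine integral_mono_of_nonneg (.of_forall fun x => mul_nonneg (hρ x) (abs_nonneg _))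
    (hρh.const_mul A) (.of_forall fun x => ?_)
  show ρ x * |w x * h x| ≤ A * (ρ x * |h x|)
  rw [abs_mul]
  nlinarith [mul_le_mul_of_nonneg_right (hw x) (mul_nonneg (hρ x) (abs_nonneg (h x)))]

end WeightedIntegrals

theorem integral_eq_zero_of_hasDerivAt_of_ne {E : Type*} [NormedAddCommGroup E]
    [NormedSpace ℝ E] [CompleteSpace E] {ψ ψ' : ℝ → E} {a : ℝ} (hcont : ContinuousAt ψ a)
    (hderiv : ∀ x ≠ a, HasDerivAt ψ (ψ' x) x) (hψ' : Integrable ψ') (hψ : Integrable ψ) :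
    ∫ x, ψ' x = 0 := by
  have hbot : Tendsto ψ atBot (𝓝 0) :=
    tendsto_zero_of_hasDerivAt_of_integrableOn_Iic (a := a - 1)
      (fun x hx => hderiv x (by linarith [mem_Iic.1 hx])) hψ'.integrableOn hψ.integrableOn
  have htop : Tendsto ψ atTop (𝓝 0) :=
    tendsto_zero_of_hasDerivAt_of_integrableOn_Ioi (a := a)
      (fun x hx => hderiv x (mem_Ioi.1 hx).ne') hψ'.integrableOn hψ.integrableOn
  rw [← integral_add_compl measurableSet_Iic hψ', compl_Iic,
    integral_Iic_of_hasDerivAt_of_tendsto hcont.continuousWithinAt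
      (fun x hx => hderiv x (mem_Iio.1 hx).ne) hψ'.integrableOn hbot,
    integral_Ioi_of_hasDerivAt_of_tendsto hcont.continuousWithinAt
      (fun x hx => hderiv x (mem_Ioi.1 hx).ne') hψ'.integrableOn htop]
  abel

theorem integrable_exp_neg_mul_abs_sub {lam : ℝ} (hlam : 0 < lam) (τ : ℝ) :
    Integrable fun t : ℝ => exp (-(lam * |t - τ|)) := by
  refine Integrable.comp_sub_right (f := fun t : ℝ => exp (-(lam * |t|))) ?_ τ
  rw [← integrableOn_univ, ← Iic_union_Ioi (a := 0)]
  refine (integrableOn_exp_mul_Iic hlam 0).congr_fun (fun t ht => ?_) measurableSet_Iic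
    |>.union <| (integrableOn_exp_mul_Ioi (neg_lt_zero.2 hlam) 0).congr_fun
      (fun t ht => ?_) measurableSet_Ioi
  · simp [abs_of_nonpos (mem_Iic.1 ht)]
  · simp [abs_of_pos (mem_Ioi.1 ht)]

theorem integral_exp_neg_mul_abs_sub {lam : ℝ} (hlam : 0 < lam) (τ : ℝ) :
    ∫ t : ℝ, exp (-(lam * |t - τ|)) = 2 / lam := by
  rw [integral_sub_right_eq_self (fun t : ℝ => exp (-(lam * |t|))) τ,
    integral_comp_abs (f := fun t : ℝ => exp (-(lam * t)))]
  simp_rw [← neg_mul]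
  rw [integral_exp_mul_Ioi (neg_lt_zero.2 hlam)]
  field_simp
  simp

theorem integral_exp_neg_mul_abs_sub_mul_deriv_le {lam τ : ℝ} (hlam : 0 ≤ lam) {φ φ' : ℝ → ℝ}
    (hφ : ∀ t, HasDerivAt φ (φ' t) t)
    (hφi : Integrable fun t => exp (-(lam * |t - τ|)) * φ t)
    (hφ'i : Integrable fun t => exp (-(lam * |t - τ|)) * φ' t) :
    ∫ t, exp (-(lam * |t - τ|)) * φ' t ≤ lam * ∫ t, exp (-(lam * |t - τ|)) * |φ t| := by
  -- away from `τ`, the derivative of the weight times `φ` is `-lam * k`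
  let k : ℝ → ℝ := (Ioi τ).indicator (fun t => exp (-(lam * |t - τ|)) * φ t) -
    (Iic τ).indicator (fun t => exp (-(lam * |t - τ|)) * φ t)
  have hk : Integrable k := (hφi.indicator measurableSet_Ioi).sub (hφi.indicator measurableSet_Iic)
  have hderiv : ∀ x ≠ τ, HasDerivAt (fun t => exp (-(lam * |t - τ|)) * φ t)
      (exp (-(lam * |x - τ|)) * φ' x - lam * k x) x := by
    intro x hx
    have habs := (hasDerivAt_abs (sub_ne_zero.2 hx)).comp x ((hasDerivAt_id x).sub_const τ)
    refine (((habs.const_mul lam).neg.exp).mul (hφ x)).congr_deriv ?_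
    rcases hx.lt_or_gt with h | h
    · simp only [k, sign_neg (sub_neg.2 h), Pi.sub_apply, Pi.neg_apply, Function.comp_apply, id_eq,
        indicator_of_notMem (notMem_Ioi.2 h.le), indicator_of_mem (mem_Iic.2 h.le),
        SignType.coe_neg, SignType.coe_one]
      ring
    · simp only [k, sign_pos (sub_pos.2 h), Pi.sub_apply, Pi.neg_apply, Function.comp_apply, id_eq,
        indicator_of_mem (mem_Ioi.2 h), indicator_of_notMem (notMem_Iic.2 h),
        SignType.coe_one]
      ring
  have hint : ∫ t, exp (-(lam * |t - τ|)) * φ' t - lam * k t = 0 :=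
    integral_eq_zero_of_hasDerivAt_of_ne
      ((by fun_prop : Continuous fun t => exp (-(lam * |t - τ|))).continuousAt.mul
        (hφ τ).continuousAt) hderiv (hφ'i.sub (hk.const_mul lam)) hφi
  have hk_le : ∀ t, k t ≤ exp (-(lam * |t - τ|)) * |φ t| := by
    intro t
    rcases le_or_gt t τ with h | h
    · simp only [k, Pi.sub_apply, indicator_of_notMem (notMem_Ioi.2 h),
        indicator_of_mem (mem_Iic.2 h), zero_sub, ← mul_neg]
      exact mul_le_mul_of_nonneg_left (neg_le_abs _) (exp_pos _).le
    · simp only [k, Pi.sub_apply, indicator_of_mem (mem_Ioi.2 h),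
        indicator_of_notMem (notMem_Iic.2 h), sub_zero]
      exact mul_le_mul_of_nonneg_left (le_abs_self _) (exp_pos _).le
  calc ∫ t, exp (-(lam * |t - τ|)) * φ' t = lam * ∫ t, k t := by
        rw [integral_sub hφ'i (hk.const_mul lam), integral_const_mul] at hint
        linarith
    _ ≤ lam * ∫ t, exp (-(lam * |t - τ|)) * |φ t| := mul_le_mul_of_nonneg_left
        (integral_mono hk (hφi.mul_abs_of_nonneg fun t => (exp_pos _).le) hk_le) hlam

theorem integral_exp_neg_mul_abs_sub_mul_deriv_sq_le {lam τ A : ℝ} (hlam : 0 ≤ lam)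
    {w f g : ℝ → ℝ} (hw : ∀ t, HasDerivAt w (f t) t) (hf : ∀ t, HasDerivAt f (g t) t)
    (hwA : ∀ t, |w t| ≤ A) (hX : Integrable fun t => exp (-(lam * |t - τ|)) * f t ^ 2)
    (hρf : Integrable fun t => exp (-(lam * |t - τ|)) * f t)
    (hρg : Integrable fun t => exp (-(lam * |t - τ|)) * g t) :
    ∫ t, exp (-(lam * |t - τ|)) * f t ^ 2 ≤
      lam * A * (∫ t, exp (-(lam * |t - τ|)) * |f t|) +
        A * ∫ t, exp (-(lam * |t - τ|)) * |g t| := by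
  have hρ : ∀ t, 0 ≤ exp (-(lam * |t - τ|)) := fun t => (exp_pos _).le
  have hwc : Continuous w := continuous_iff_continuousAt.2 fun t => (hw t).continuousAt
  have hρwf : Integrable fun t => exp (-(lam * |t - τ|)) * (w t * f t) := by
    simpa only [mul_left_comm] using hρf.bdd_mul hwc.aestronglyMeasurable (.of_forall hwA)
  have hρwg : Integrable fun t => exp (-(lam * |t - τ|)) * (w t * g t) := by
    simpa only [mul_left_comm] using hρg.bdd_mul hwc.aestronglyMeasurable (.of_forall hwA)
  have hXf : (∫ t, exp (-(lam * |t - τ|)) * f t ^ 2) +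
      ∫ t, exp (-(lam * |t - τ|)) * (w t * g t) ≤
        lam * (A * ∫ t, exp (-(lam * |t - τ|)) * |f t|) := calc
    _ = ∫ t, exp (-(lam * |t - τ|)) * (f t * f t + w t * g t) := by
      rw [← integral_add hX hρwg]; congr 1; funext t; ring
    _ ≤ lam * ∫ t, exp (-(lam * |t - τ|)) * |w t * f t| :=
      integral_exp_neg_mul_abs_sub_mul_deriv_le hlam (fun t => (hw t).mul (hf t)) hρwf
        ((hX.add hρwg).congr (.of_forall fun t => by simp only [Pi.add_apply]; ring))
    _ ≤ _ := by
      gcongr; exact integral_mul_abs_mul_le hρ hwA (hρf.mul_abs_of_nonneg hρ)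
  have hXg : -∫ t, exp (-(lam * |t - τ|)) * (w t * g t) ≤
      A * ∫ t, exp (-(lam * |t - τ|)) * |g t| := calc
    _ ≤ ∫ t, exp (-(lam * |t - τ|)) * |w t * g t| := by
      rw [← integral_neg]
      refine integral_mono hρwg.neg (hρwg.mul_abs_of_nonneg hρ) fun t => ?_
      rw [← mul_neg]
      exact mul_le_mul_of_nonneg_left (neg_le_abs _) (hρ t)
    _ ≤ _ := integral_mul_abs_mul_le hρ hwA (hρg.mul_abs_of_nonneg hρ)
  linarith

theorem sq_le_of_le_mul_add_mul {lam A X Y I J : ℝ} (hlam : 0 < lam) (hX : 0 ≤ X)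
    (hXIJ : X ≤ lam * A * I + A * J) (hI : I ^ 2 ≤ 2 / lam * X) (hJ : J ^ 2 ≤ 2 / lam * Y) :
    X ^ 2 ≤ 16 * (lam ^ 2 * A ^ 4 + lam⁻¹ * A ^ 2 * Y) := by
  have hY : 0 ≤ lam⁻¹ * A ^ 2 * Y := by
    have : 0 ≤ 2 / lam * Y := (sq_nonneg J).trans hJ
    have : 0 ≤ Y := nonneg_of_mul_nonneg_right this (by positivity)
    positivity
  have hsq : X ^ 2 ≤ 4 * lam * A ^ 2 * X + 4 * (lam⁻¹ * A ^ 2 * Y) := calc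
    X ^ 2 ≤ (lam * A * I + A * J) ^ 2 := pow_le_pow_left₀ hX hXIJ 2
    _ ≤ 2 * (lam * A) ^ 2 * I ^ 2 + 2 * A ^ 2 * J ^ 2 := by
      nlinarith [sq_nonneg (lam * A * I - A * J)]
    _ ≤ 2 * (lam * A) ^ 2 * (2 / lam * X) + 2 * A ^ 2 * (2 / lam * Y) := by gcongr
    _ = 4 * lam * A ^ 2 * X + 4 * (lam⁻¹ * A ^ 2 * Y) := by field_simp; ring
  nlinarith [sq_nonneg (X - 4 * lam * A ^ 2)]

theorem sq_integral_exp_neg_mul_abs_sub_mul_deriv_sq_le {lam τ A : ℝ} (hlam : 0 < lam)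
    {w f g : ℝ → ℝ} (hw : ∀ t, HasDerivAt w (f t) t) (hf : ∀ t, HasDerivAt f (g t) t)
    (hwA : ∀ t, |w t| ≤ A) (hX : Integrable fun t => exp (-(lam * |t - τ|)) * f t ^ 2)
    (hY : Integrable fun t => exp (-(lam * |t - τ|)) * g t ^ 2) :
    (∫ t, exp (-(lam * |t - τ|)) * f t ^ 2) ^ 2 ≤
      16 * (lam ^ 2 * A ^ 4 + lam⁻¹ * A ^ 2 * ∫ t, exp (-(lam * |t - τ|)) * g t ^ 2) := by
  have hρ : ∀ t, 0 ≤ exp (-(lam * |t - τ|)) := fun t => (exp_pos _).le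
  have hρi := integrable_exp_neg_mul_abs_sub hlam τ
  have hfc : Continuous f := continuous_iff_continuousAt.2 fun t => (hf t).continuousAt
  have hgm : Measurable g := by
    simpa only [funext fun t => (hf t).deriv] using measurable_deriv f
  have hρf := hρi.mul_of_integrable_mul_sq hρ hX hfc.aestronglyMeasurable
  have hρg := hρi.mul_of_integrable_mul_sq hρ hY hgm.aestronglyMeasurable
  have hCS : ∀ {h : ℝ → ℝ}, Integrable (fun t => exp (-(lam * |t - τ|)) * h t) →
      Integrable (fun t => exp (-(lam * |t - τ|)) * h t ^ 2) →
      (∫ t, exp (-(lam * |t - τ|)) * |h t|) ^ 2 ≤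
        2 / lam * ∫ t, exp (-(lam * |t - τ|)) * h t ^ 2 := fun hh hh2 => by
    simpa only [sq_abs, integral_exp_neg_mul_abs_sub hlam] using
      sq_integral_mul_le hρ hρi (hh.mul_abs_of_nonneg hρ) (by simpa only [sq_abs] using hh2)
  exact sq_le_of_le_mul_add_mul hlam (integral_nonneg fun t => by positivity)
    (integral_exp_neg_mul_abs_sub_mul_deriv_sq_le hlam.le hw hf hwA hX hρf hρg)
    (hCS hρf hX) (hCS hρg hY)

/-- Weighted Poincaré-type interpolation (Lemma "poincare1"): with
`X = ∫ e^{-λ|t-τ|}(u' - u⁰')²` and `Y = ∫ e^{-λ|t-τ|}(u'' - u⁰'')²`, and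
`‖u - u⁰‖_∞ ≤ A`, one has `X² ≤ C (λ² A⁴ + λ⁻¹ A² Y)` for an absolute constant `C`. -/
theorem stmt14 : ∃ C > (0:ℝ), ∀ (lam τ A : ℝ), 0 < lam → 0 < A →
    ∀ u u0 : ℝ → ℝ, ContDiff ℝ 2 u → ContDiff ℝ 2 u0 →
    (∀ t, |u t - u0 t| ≤ A) →
    MeasureTheory.Integrable
      (fun t => Real.exp (-(lam * |t - τ|)) * (deriv u t - deriv u0 t) ^ 2) →
    MeasureTheory.Integrable
      (fun t => Real.exp (-(lam * |t - τ|)) * (deriv (deriv u) t - deriv (deriv u0) t) ^ 2) →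
    (∫ t : ℝ, Real.exp (-(lam * |t - τ|)) * (deriv u t - deriv u0 t) ^ 2) ^ 2 ≤
      C * (lam ^ 2 * A ^ 4 + lam⁻¹ * A ^ 2 *
        ∫ t : ℝ, Real.exp (-(lam * |t - τ|)) * (deriv (deriv u) t - deriv (deriv u0) t) ^ 2) := by
  refine ⟨16, by norm_num, fun lam τ A hlam _ u u0 hu hu0 huA hX hY => ?_⟩
  have hdu : ∀ {v : ℝ → ℝ}, ContDiff ℝ 2 v → ∀ t, HasDerivAt v (deriv v t) t := fun hv t =>
    (hv.differentiable two_ne_zero t).hasDerivAt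
  have hddu : ∀ {v : ℝ → ℝ}, ContDiff ℝ 2 v → ∀ t, HasDerivAt (deriv v) (deriv (deriv v) t) t :=
    fun hv t => ((hv.iterate_deriv' 1 1).differentiable one_ne_zero t).hasDerivAt
  exact sq_integral_exp_neg_mul_abs_sub_mul_deriv_sq_le hlam
    (fun t => (hdu hu t).sub (hdu hu0 t)) (fun t => (hddu hu t).sub (hddu hu0 t)) huA hX hY
end
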